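/- arXiv:1212.0751 — 3 statements merged into one kernel-verified Lean document; each statement's English description precedes it below -/
import Mathlib

section
/- Let T be a binary tree of size n. Then B_T(1), the value of the Tamari polynomial of T at x = 1, equals the number of binary trees T' of size n with T' ≤ T in the Tamari order. -/
open Polynomial

/-- A binary tree: either the empty tree or a pair of binary trees
(left and right subtrees) grafted on an internal node. -/
inductive BinTree : Type
  | leaf : BinTree
  | node : BinTree → BinTree → BinTree

namespace BinTree

/-- The size of a binary tree: its number of internal nodes. -/
def size : BinTree → ℕ
  | leaf => 0
  | node l r => l.size + r.size + 1

/-- One right rotation somewhere in the tree: `Rot T T'` means that `T'` is obtained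
from `T` by replacing one subtree of the form `y(x(A,B),C)` by `x(A,y(B,C))`. -/
inductive Rot : BinTree → BinTree → Prop
  | root (A B C : BinTree) : Rot (node (node A B) C) (node A (node B C))
  | left {L L' : BinTree} (R : BinTree) : Rot L L' → Rot (node L R) (node L' R)
  | right (L : BinTree) {R R' : BinTree} : Rot R R' → Rot (node L R) (node L R')

/-- The Tamari order: `TamariLE T T'` iff `T'` is obtained from `T` by a (possibly empty)
sequence of right rotations. -/
def TamariLE (T T' : BinTree) : Prop := Relation.ReflTransGen Rot T T'

/-- The Tamari polynomial `B_T ∈ ℤ[x]`: `B_∅ = 1` and for `T = x(L,R)`, `B_T` is the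
unique polynomial with `(x-1)·B_T = x·B_L·(x·B_R - B_R(1))` (exact division by the
monic polynomial `X - 1`, the right-hand side vanishing at `x = 1`). -/
noncomputable def tamPoly : BinTree → Polynomial ℤ
  | leaf => 1
  | node l r =>
      (X * tamPoly l * (X * tamPoly r - C ((tamPoly r).eval 1))) /ₘ (X - C 1)

/-- The mirror Tamari polynomial, obtained by exchanging the roles of the left and
right subtrees in the recursive definition of the Tamari polynomial. -/
noncomputable def tamPolyMirror : BinTree → Polynomial ℤ
  | leaf => 1
  | node l r =>
      (X * tamPolyMirror r * (X * tamPolyMirror l - C ((tamPolyMirror l).eval 1))) /ₘ (X - C 1)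

/-- The number of nodes on the left border of a binary tree. -/
def leftBorder : BinTree → ℕ
  | leaf => 0
  | node l _ => l.leftBorder + 1

/-- The number of nodes on the right border of a binary tree. -/
def rightBorder : BinTree → ℕ
  | leaf => 0
  | node _ r => r.rightBorder + 1

/-- `inSub T a b`: in the unique binary-search-tree labelling of `T` by `1,…,size T`
(all labels of the left subtree of a node are smaller than its label, all labels of its
right subtree are larger), the node labelled `a` belongs to the subtree rooted at the
node labelled `b` (in particular `inSub T a a` holds for every node label `a`). -/
def inSub : BinTree → ℕ → ℕ → Prop
  | leaf => fun _ _ => False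
  | node l r => fun a b =>
      (b = l.size + 1 ∧ 1 ≤ a ∧ a ≤ l.size + r.size + 1) ∨
      inSub l a b ∨
      (l.size + 1 < a ∧ l.size + 1 < b ∧ inSub r (a - (l.size + 1)) (b - (l.size + 1)))

/-- The binary search tree poset of `T`: `bstRel T a b` iff `a ≺_T b`, i.e. `a ≠ b` and
the node labelled `a` is in the subtree rooted at the node labelled `b`. -/
def bstRel (T : BinTree) (a b : ℕ) : Prop := a ≠ b ∧ inSub T a b

/-- The increasing forest `inc(T)`: `a ≺ b` iff `a < b` and `a ≺_T b`. -/
def incRel (T : BinTree) (a b : ℕ) : Prop := a < b ∧ bstRel T a b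

/-- The decreasing forest `dec(T)`: `b ≺ a` iff `b > a` and `b ≺_T a`. -/
def decRel (T : BinTree) (a b : ℕ) : Prop := b < a ∧ bstRel T a b

/-- The relations of the interval-poset `IP[T,T']`: exactly those of `dec(T)`
together with those of `inc(T')`. -/
def IPrel (T T' : BinTree) (a b : ℕ) : Prop := decRel T a b ∨ incRel T' a b

end BinTree

open BinTree

/-- `σ` is a linear extension of the strict relation `rel` on `{1,…,n}`: reading the word
`σ(1)…σ(n)` (the `i`-th letter being the label `(σ i : ℕ) + 1`), whenever `rel a b` holds
the letter `a` appears before the letter `b`. -/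
def IsLinExt (n : ℕ) (rel : ℕ → ℕ → Prop) (σ : Equiv.Perm (Fin n)) : Prop :=
  ∀ i j : Fin n, rel ((σ i : ℕ) + 1) ((σ j : ℕ) + 1) → i < j

/-- An interval-poset of size `n`: a (strict) poset on `{1,…,n}` such that
`a ≺ c` implies `b ≺ c` for all `a < b < c`, and `c ≺ a` implies `b ≺ a` for all
`a < b < c`. -/
def IsIntervalPoset (n : ℕ) (rel : ℕ → ℕ → Prop) : Prop :=
  (∀ a b, rel a b → 1 ≤ a ∧ a ≤ n ∧ 1 ≤ b ∧ b ≤ n) ∧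
  (∀ a, ¬ rel a a) ∧
  (∀ a b c, rel a b → rel b c → rel a c) ∧
  (∀ a b c, a < b → b < c → rel a c → rel b c) ∧
  (∀ a b c, a < b → b < c → rel c a → rel b a)

/-- `trees(P)` : the number of connected components of the forest formed by the decreasing
relations of `P`, i.e. the number of `k ∈ {1,…,n}` such that there is no `j < k`
with `k ≺_P j`. -/
noncomputable def treeStat (n : ℕ) (rel : ℕ → ℕ → Prop) : ℕ :=
  Set.ncard {k : ℕ | 1 ≤ k ∧ k ≤ n ∧ ∀ j, j < k → ¬ rel k j}

/-- The composition `𝔹(I1,I2)` of two interval-posets of sizes `k1` and `k2`: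
the set of interval-posets `I` of size `k1+k2+1` such that
(i) the relations of `I` among `1,…,k1` are exactly those of `I1`,
(ii) the relations of `I` among `k1+2,…,k1+k2+1` are exactly those of `I2` shifted
by `k1+1`, (iii) `i ≺_I k1+1` for all `i ≤ k1`, and (iv) there is no relation
`k1+1 ≺_I j` for `j > k1+1`. -/
def Comp (k1 k2 : ℕ) (I1 I2 : ℕ → ℕ → Prop) : Set (ℕ → ℕ → Prop) :=
  {I | IsIntervalPoset (k1 + k2 + 1) I ∧
    (∀ a b, 1 ≤ a → a ≤ k1 → 1 ≤ b → b ≤ k1 → (I a b ↔ I1 a b)) ∧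
    (∀ a b, k1 + 2 ≤ a → a ≤ k1 + k2 + 1 → k1 + 2 ≤ b → b ≤ k1 + k2 + 1 →
      (I a b ↔ I2 (a - (k1 + 1)) (b - (k1 + 1)))) ∧
    (∀ i, 1 ≤ i → i ≤ k1 → I i (k1 + 1)) ∧
    (∀ j, k1 + 1 < j → ¬ I (k1 + 1) j)}

/-- The co-inversions of a permutation `σ` of `{1,…,n}` (written as the word
`σ(1)…σ(n)`): pairs `(σ(i), σ(j))` with `i < j` and `σ(i) > σ(j)`. -/
def coinv (n : ℕ) (σ : Equiv.Perm (Fin n)) : Set (Fin n × Fin n) :=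
  {p | ∃ i j : Fin n, i < j ∧ σ j < σ i ∧ p = (σ i, σ j)}

/-!
Every tree below `x(L, R)` in the Tamari order arises in exactly one way by taking
`L' ≤ L` and `R' ≤ R` and grafting `L'` at one of the `leftBorder R' + 1` depths of the
left border of `R'`: rotations at the root only push the left subtree further down the
left border. Grafting `L'` at depth `i` yields a tree with left border
`leftBorder L' + i + 1`, so summing the geometric series over `i` shows that
`∑_{T' ≤ T} x ^ leftBorder T'` satisfies the defining recursion of `B_T`. Evaluating
at `x = 1` counts the trees below `T`.
-/

theorem sub_one_mul_sum_range_pow {R : Type*} [CommRing R] (x : R) (a m : ℕ) :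
    (x - 1) * ∑ i ∈ Finset.range (m + 1), x ^ (a + i + 1) = x ^ (a + 1) * (x ^ (m + 1) - 1) := by
  have hshift : ∑ i ∈ Finset.range (m + 1), x ^ (a + i + 1) =
      x ^ (a + 1) * ∑ i ∈ Finset.range (m + 1), x ^ i := by
    rw [Finset.mul_sum]
    exact Finset.sum_congr rfl fun i _ => by ring
  rw [hshift]
  linear_combination x ^ (a + 1) * geom_sum_mul x (m + 1)

namespace BinTree

deriving instance DecidableEq for BinTree

theorem Rot.size_eq {t t' : BinTree} (h : Rot t t') : t.size = t'.size := by
  induction h with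
  | root => simp only [size]; omega
  | left _ _ ih | right _ _ ih => simp only [size, ih]

theorem TamariLE.size_eq {t t' : BinTree} (h : TamariLE t t') : t.size = t'.size := by
  induction h with
  | refl => rfl
  | tail _ hrot ih => exact ih.trans hrot.size_eq

theorem TamariLE.node {l l' r r' : BinTree} (hl : TamariLE l l') (hr : TamariLE r r') :
    TamariLE (node l r) (node l' r') :=
  Relation.ReflTransGen.trans
    (Relation.ReflTransGen.lift (BinTree.node · r) (fun _ _ => Rot.left r) _ _ hl)
    (Relation.ReflTransGen.lift (BinTree.node l') (fun _ _ => Rot.right l') _ _ hr)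

theorem eq_leaf_of_tamariLE_leaf {t : BinTree} (h : TamariLE t leaf) : t = leaf := by
  cases t with
  | leaf => rfl
  | node l r => have := h.size_eq; simp [size] at this

/-- Inserts a new node at depth `i` of the left border of `r`, with left subtree `L`
(when the border is too short, `L` ends up at its bottom). -/
def graft (L : BinTree) : BinTree → ℕ → BinTree
  | r, 0 => node L r
  | leaf, _ + 1 => node L leaf
  | node a b, i + 1 => node (graft L a i) b

@[simp] theorem graft_zero (L r : BinTree) : graft L r 0 = node L r := by
  cases r <;> rfl

@[simp] theorem graft_node_succ (L a b : BinTree) (i : ℕ) :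
    graft L (node a b) (i + 1) = node (graft L a i) b := rfl

theorem size_graft (L r : BinTree) (i : ℕ) : (graft L r i).size = L.size + r.size + 1 := by
  induction r generalizing i with
  | leaf => cases i <;> rfl
  | node a b iha =>
    cases i with
    | zero => rfl
    | succ i => simp only [graft_node_succ, size, iha]; omega

theorem leftBorder_graft (L : BinTree) {r : BinTree} {i : ℕ} (h : i ≤ r.leftBorder) :
    (graft L r i).leftBorder = L.leftBorder + i + 1 := by
  induction r generalizing i with
  | leaf => obtain rfl : i = 0 := Nat.le_zero.mp h; rfl
  | node a b iha =>
    cases i with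
    | zero => rfl
    | succ i =>
      simp only [graft_node_succ, leftBorder, iha (Nat.le_of_succ_le_succ h)]; omega

theorem rot_graft_succ (L : BinTree) {r : BinTree} {i : ℕ} (h : i < r.leftBorder) :
    Rot (graft L r (i + 1)) (graft L r i) := by
  induction r generalizing i with
  | leaf => simp [leftBorder] at h
  | node a b iha =>
    cases i with
    | zero => simpa using Rot.root L a b
    | succ i => exact Rot.left b (iha (Nat.lt_of_succ_lt_succ h))

theorem graft_tamariLE (L : BinTree) {r : BinTree} {i : ℕ} (h : i ≤ r.leftBorder) :
    TamariLE (graft L r i) (node L r) := by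
  induction i with
  | zero => rw [graft_zero]; exact Relation.ReflTransGen.refl
  | succ i ih => exact .head (rot_graft_succ L h) (ih (Nat.le_of_succ_le h))

theorem exists_eq_node_of_pos_leftBorder {r : BinTree} (h : 0 < r.leftBorder) :
    ∃ a b, r = node a b := by
  cases r with
  | leaf => simp [leftBorder] at h
  | node a b => exact ⟨a, b, rfl⟩

theorem eq_of_graft_eq_graft {L₁ R₁ L₂ R₂ : BinTree} {i₁ i₂ : ℕ} (h₁ : i₁ ≤ R₁.leftBorder)
    (h₂ : i₂ ≤ R₂.leftBorder) (hsize : L₁.size = L₂.size)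
    (h : graft L₁ R₁ i₁ = graft L₂ R₂ i₂) : L₁ = L₂ ∧ R₁ = R₂ ∧ i₁ = i₂ := by
  induction i₁ generalizing R₁ R₂ i₂ with
  | zero =>
    cases i₂ with
    | zero => simpa using h
    | succ i₂ =>
      obtain ⟨a, b, rfl⟩ := exists_eq_node_of_pos_leftBorder (Nat.lt_of_lt_of_le i₂.succ_pos h₂)
      rw [graft_zero, graft_node_succ] at h
      -- the left subtree of the root would be `L₁` on one side and contain `L₂` strictly
      have hL := congrArg size (node.inj h).1
      simp only [size_graft] at hL
      omega
  | succ i₁ ih =>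
    obtain ⟨a₁, b₁, rfl⟩ := exists_eq_node_of_pos_leftBorder (Nat.lt_of_lt_of_le i₁.succ_pos h₁)
    cases i₂ with
    | zero =>
      rw [graft_zero, graft_node_succ] at h
      have hL := congrArg size (node.inj h).1
      simp only [size_graft] at hL
      omega
    | succ i₂ =>
      obtain ⟨a₂, b₂, rfl⟩ := exists_eq_node_of_pos_leftBorder (Nat.lt_of_lt_of_le i₂.succ_pos h₂)
      obtain ⟨ha, rfl⟩ := node.inj h
      obtain ⟨rfl, rfl, rfl⟩ := ih (Nat.le_of_succ_le_succ h₁) (Nat.le_of_succ_le_succ h₂) ha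
      exact ⟨rfl, rfl, rfl⟩

theorem exists_graft_of_rot_graft {L R U : BinTree} {i : ℕ} (hi : i ≤ R.leftBorder)
    (h : Rot U (graft L R i)) :
    ∃ L' R' j, j ≤ R'.leftBorder ∧ TamariLE L' L ∧ TamariLE R' R ∧ graft L' R' j = U := by
  induction i generalizing R U with
  | zero =>
    rw [graft_zero] at h
    cases h with
    | root A B C => exact ⟨L, node B C, 1, by simp [leftBorder], .refl, .refl, by simp⟩
    | left _ hL => exact ⟨_, R, 0, Nat.zero_le _, .single hL, .refl, by simp⟩
    | right _ hR => exact ⟨L, _, 0, Nat.zero_le _, .refl, .single hR, by simp⟩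
  | succ i ih =>
    obtain ⟨a, b, rfl⟩ := exists_eq_node_of_pos_leftBorder (Nat.lt_of_lt_of_le i.succ_pos hi)
    have hia : i ≤ a.leftBorder := Nat.le_of_succ_le_succ hi
    rw [graft_node_succ] at h
    cases h with
    | root A B C =>
      exact ⟨L, node (node a B) C, i + 2, by simpa [leftBorder] using hia, .refl,
        .single (Rot.root a B C), by simp⟩
    | left _ hA =>
      obtain ⟨L', a', j, hj, hL, ha, rfl⟩ := ih hia hA
      exact ⟨L', node a' b, j + 1, by simpa [leftBorder] using hj, hL, ha.node .refl, by simp⟩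
    | @right _ b' _ hB =>
      exact ⟨L, node a b', i + 1, by simpa [leftBorder] using hia, .refl,
        TamariLE.node .refl (.single hB), by simp⟩

theorem tamariLE_node_iff {T L R : BinTree} :
    TamariLE T (node L R) ↔
      ∃ L' R' i, i ≤ R'.leftBorder ∧ TamariLE L' L ∧ TamariLE R' R ∧ graft L' R' i = T := by
  constructor
  · intro h
    induction h using Relation.ReflTransGen.head_induction_on with
    | refl => exact ⟨L, R, 0, Nat.zero_le _, .refl, .refl, graft_zero L R⟩
    | head hrot _ ih =>
      obtain ⟨L₁, R₁, i₁, hi₁, hL₁, hR₁, rfl⟩ := ih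
      obtain ⟨L₂, R₂, i₂, hi₂, hL₂, hR₂, rfl⟩ := exists_graft_of_rot_graft hi₁ hrot
      exact ⟨L₂, R₂, i₂, hi₂, hL₂.trans hL₁, hR₂.trans hR₁, rfl⟩
  · rintro ⟨L', R', i, hi, hL, hR, rfl⟩
    exact (graft_tamariLE L' hi).trans (hL.node hR)

/-- The lower Tamari interval of `T`, enumerated through `tamariLE_node_iff`. -/
def tamariIic : BinTree → Finset BinTree
  | leaf => {leaf}
  | node L R =>
      ((tamariIic L ×ˢ tamariIic R).sigma fun p => Finset.range (p.2.leftBorder + 1)).image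
        fun x => graft x.1.1 x.1.2 x.2

theorem mem_tamariIic {T T' : BinTree} : T' ∈ tamariIic T ↔ TamariLE T' T := by
  induction T generalizing T' with
  | leaf =>
    simp only [tamariIic, Finset.mem_singleton]
    exact ⟨fun h => h ▸ .refl, eq_leaf_of_tamariLE_leaf⟩
  | node L R ihL ihR =>
    simp only [tamariIic, Finset.mem_image, Finset.mem_sigma, Finset.mem_product,
      Finset.mem_range, Nat.lt_succ_iff, tamariLE_node_iff, ihL, ihR, Sigma.exists,
      Prod.exists]
    grind

theorem sum_tamariIic_node {M : Type*} [AddCommMonoid M] (f : BinTree → M) (L R : BinTree) :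
    ∑ T ∈ tamariIic (node L R), f T =
      ∑ L' ∈ tamariIic L, ∑ R' ∈ tamariIic R, ∑ i ∈ Finset.range (R'.leftBorder + 1),
        f (graft L' R' i) := by
  rw [tamariIic, Finset.sum_image, Finset.sum_sigma, Finset.sum_product]
  rintro ⟨⟨L₁, R₁⟩, i₁⟩ h₁ ⟨⟨L₂, R₂⟩, i₂⟩ h₂ h
  simp only [Finset.coe_sigma, Set.mem_sigma_iff, Finset.coe_product, Set.mem_prod,
    Finset.mem_coe, mem_tamariIic, Finset.mem_range, Nat.lt_succ_iff] at h₁ h₂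
  obtain ⟨rfl, rfl, rfl⟩ := eq_of_graft_eq_graft h₁.2 h₂.2
    (h₁.1.1.size_eq.trans h₂.1.1.size_eq.symm) h
  rfl

theorem tamPoly_eq_sum_tamariIic (T : BinTree) :
    tamPoly T = ∑ T' ∈ tamariIic T, (X : ℤ[X]) ^ T'.leftBorder := by
  induction T with
  | leaf => simp [tamPoly, tamariIic, leftBorder]
  | node L R ihL ihR =>
    have hR : X * tamPoly R - C ((tamPoly R).eval 1) =
        ∑ R' ∈ tamariIic R, ((X : ℤ[X]) ^ (R'.leftBorder + 1) - 1) := by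
      simp [ihR, eval_finsetSum, Finset.mul_sum, pow_succ']
    have key : X * tamPoly L * (X * tamPoly R - C ((tamPoly R).eval 1)) =
        (X - C 1) * ∑ T' ∈ tamariIic (node L R), (X : ℤ[X]) ^ T'.leftBorder := by
      calc X * tamPoly L * (X * tamPoly R - C ((tamPoly R).eval 1))
          = ∑ L' ∈ tamariIic L, ∑ R' ∈ tamariIic R,
              (X : ℤ[X]) ^ (L'.leftBorder + 1) * (X ^ (R'.leftBorder + 1) - 1) := by
            rw [hR, ihL, Finset.mul_sum _ _ X, Finset.sum_mul_sum]
            simp only [pow_succ']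
        _ = ∑ L' ∈ tamariIic L, ∑ R' ∈ tamariIic R, (X - C 1) *
              ∑ i ∈ Finset.range (R'.leftBorder + 1), (X : ℤ[X]) ^ (L'.leftBorder + i + 1) := by
            simp only [C_1, sub_one_mul_sum_range_pow]
        _ = (X - C 1) * ∑ T' ∈ tamariIic (node L R), (X : ℤ[X]) ^ T'.leftBorder := by
            simp only [sum_tamariIic_node, Finset.mul_sum]
            refine Finset.sum_congr rfl fun L' _ => Finset.sum_congr rfl fun R' _ =>
              Finset.sum_congr rfl fun i hi => ?_
            rw [leftBorder_graft L' (Nat.lt_succ_iff.mp (Finset.mem_range.mp hi))]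
    rw [tamPoly, key, mul_divByMonic_cancel_left _ (monic_X_sub_C 1)]

end BinTree

/-- For a binary tree `T` of size `n`, the value `B_T(1)` of the Tamari
polynomial of `T` at `x = 1` equals the number of binary trees `T'` of size `n` with
`T' ≤ T` in the Tamari order. -/
theorem tamPoly_eval_one (T : BinTree) :
    (tamPoly T).eval 1 =
      (Nat.card {T' : BinTree // T'.size = T.size ∧ TamariLE T' T} : ℤ) := by
  have hIic : {T' : BinTree // T'.size = T.size ∧ TamariLE T' T} ≃ tamariIic T :=
    Equiv.subtypeEquivRight fun T' =>
      ⟨fun h => mem_tamariIic.2 h.2, fun h => ⟨(mem_tamariIic.1 h).size_eq, mem_tamariIic.1 h⟩⟩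
  rw [Nat.card_congr hIic, Nat.card_eq_finsetCard, tamPoly_eq_sum_tamariIic,
    eval_finsetSum]
  simp
end

section
/- For every binary tree T of size n, a permutation σ of {1,…,n} is a linear extension of the increasing forest inc(T) if and only if σ is a linear extension of the binary search tree poset of some binary tree T' of size n with T' ≤ T in the Tamari order; that is, ExtL(inc(T)) = ⋃_{T' ≤ T} ExtL(T'). -/
open Polynomial

open BinTree

/-!
The left-subtree sizes `leftSizeAt T b` (the bracket vector of `T`) determine `T` and encode
`inc(T)`: `a ≺ b` in `inc(T)` iff `b - leftSizeAt T b ≤ a < b`. A right rotation lowers one entry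
of the bracket vector; conversely, if the bracket vector of `T'` dominates that of `T` without
being equal to it, some rotation of `T'` lowers it and still dominates `T`. Hence, for trees of
the same size, `T' ≤ T` iff `inc(T) ⊆ inc(T')`. A linear extension `σ` of `inc(T)` is a linear
extension of the binary search tree `T'` obtained by inserting the letters of `σ` from right to
left, and `inc(T) ⊆ inc(T')`: if `a ≺ b` in `inc(T)`, every label between `a` and `b` lies below
`b` in `T`, so precedes `b` in `σ`.
-/

namespace BinTree

/-- The size of the left subtree of the node labelled `b` (`0` if there is no such node). -/
def leftSizeAt : BinTree → ℕ → ℕ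
  | leaf, _ => 0
  | node l r, b =>
    if b ≤ l.size then leftSizeAt l b
    else if b = l.size + 1 then l.size
    else leftSizeAt r (b - (l.size + 1))

section LeftSize

variable {l r T : BinTree} {a b c : ℕ}

@[simp] lemma leftSizeAt_leaf : leftSizeAt leaf b = 0 := rfl

lemma leftSizeAt_node_of_le (h : b ≤ l.size) : leftSizeAt (node l r) b = leftSizeAt l b := by
  simp [leftSizeAt, h]

@[simp] lemma leftSizeAt_node_self : leftSizeAt (node l r) (l.size + 1) = l.size := by
  simp [leftSizeAt]

lemma leftSizeAt_node_of_lt (h : l.size + 1 < b) :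
    leftSizeAt (node l r) b = leftSizeAt r (b - (l.size + 1)) := by
  simp [leftSizeAt, show ¬ b ≤ l.size by omega, show b ≠ l.size + 1 by omega]

lemma leftSizeAt_lt (hb : 0 < b) : leftSizeAt T b < b := by
  induction T generalizing b with
  | leaf => simpa
  | node l r ihl ihr =>
    unfold leftSizeAt
    split_ifs
    · exact ihl hb
    · omega
    · have := ihr (b := b - (l.size + 1)) (by omega)
      omega

lemma one_le_and_le_size_of_leftSizeAt_pos (h : 0 < leftSizeAt T b) : 1 ≤ b ∧ b ≤ T.size := by
  induction T generalizing b with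
  | leaf => simp at h
  | node l r ihl ihr =>
    unfold leftSizeAt at h
    simp only [size]
    split_ifs at h
    · have := ihl h; omega
    · omega
    · have := ihr h; omega

@[simp] lemma leftSizeAt_zero : leftSizeAt T 0 = 0 := by
  by_contra h'
  have := one_le_and_le_size_of_leftSizeAt_pos (Nat.pos_of_ne_zero h')
  omega

lemma leftSizeAt_le_self : leftSizeAt T b ≤ b := by
  rcases Nat.eq_zero_or_pos b with rfl | hb
  · simp
  · exact (leftSizeAt_lt hb).le

lemma leftSizeAt_eq_zero_of_size_lt (h : T.size < b) : leftSizeAt T b = 0 := by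
  by_contra h'
  have := one_le_and_le_size_of_leftSizeAt_pos (Nat.pos_of_ne_zero h')
  omega

lemma inSub_bounds (h : inSub T a b) : 1 ≤ a ∧ a ≤ T.size ∧ 1 ≤ b ∧ b ≤ T.size := by
  induction T generalizing a b with
  | leaf => exact h.elim
  | node l r ihl ihr =>
    simp only [size]
    rcases h with h | h | ⟨_, _, h⟩
    · omega
    · have := ihl h; omega
    · have := ihr h; omega

lemma inSub_iff_of_le (hab : a ≤ b) :
    inSub T a b ↔ 1 ≤ a ∧ b ≤ T.size ∧ b - leftSizeAt T b ≤ a := by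
  induction T generalizing a b with
  | leaf => simp only [inSub, size, false_iff]; omega
  | node l r ihl ihr =>
    have hl : inSub l a b → b ≤ l.size := fun h => (inSub_bounds h).2.2.2
    simp only [inSub, size]
    rcases lt_trichotomy b (l.size + 1) with hb | hb | hb
    · rw [leftSizeAt_node_of_le (by omega), ihl hab]
      constructor
      · rintro (h | h | h) <;> omega
      · intro h; exact Or.inr (Or.inl (by omega))
    · subst hb
      simp only [leftSizeAt_node_self]
      constructor
      · rintro (h | h | h)
        · omega
        · have := hl h; omega
        · omega
      · intro h; exact Or.inl ⟨trivial, by omega, by omega⟩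
    · rw [leftSizeAt_node_of_lt hb, ihr (by omega)]
      have := leftSizeAt_lt (T := r) (b := b - (l.size + 1)) (by omega)
      constructor
      · rintro (h | h | h)
        · omega
        · have := hl h; omega
        · omega
      · intro h; exact Or.inr (Or.inr (by omega))

lemma inSub_trans (hab : inSub T a b) (hbc : inSub T b c) : inSub T a c := by
  induction T generalizing a b c with
  | leaf => exact hab.elim
  | node l r ihl ihr =>
    rcases hbc with ⟨rfl, -, -⟩ | hbc | ⟨hb, hc, hbc⟩
    · have := inSub_bounds hab
      exact Or.inl ⟨rfl, this.1, this.2.1⟩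
    · have := inSub_bounds hbc
      rcases hab with ⟨rfl, -, -⟩ | hab | ⟨-, hb', -⟩
      · omega
      · exact Or.inr (Or.inl (ihl hab hbc))
      · omega
    · rcases hab with ⟨rfl, -, -⟩ | hab | ⟨ha, -, hab⟩
      · omega
      · have := inSub_bounds hab; omega
      · exact Or.inr (Or.inr ⟨ha, hc, ihr hab hbc⟩)

lemma sub_leftSizeAt_le_of_inSub (h : inSub T a b) (hab : a ≤ b) :
    b - leftSizeAt T b ≤ a - leftSizeAt T a := by
  have ha := inSub_bounds h
  have ha' : inSub T (a - leftSizeAt T a) a := by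
    have := leftSizeAt_lt (T := T) (b := a) (by omega)
    exact (inSub_iff_of_le (Nat.sub_le _ _)).2 ⟨by omega, ha.2.1, le_rfl⟩
  exact ((inSub_iff_of_le ((Nat.sub_le _ _).trans hab)).1 (inSub_trans ha' h)).2.2

lemma inSub_of_le_of_le (h : inSub T a b) (hac : a ≤ c) (hcb : c ≤ b) : inSub T c b := by
  rw [inSub_iff_of_le (hac.trans hcb)] at h
  rw [inSub_iff_of_le hcb]
  omega

lemma incRel_iff : incRel T a b ↔ 1 ≤ a ∧ a < b ∧ b ≤ T.size ∧ b - leftSizeAt T b ≤ a := by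
  unfold incRel bstRel
  constructor
  · rintro ⟨hab, -, h⟩
    rw [inSub_iff_of_le hab.le] at h
    omega
  · rintro ⟨h1, hab, h⟩
    exact ⟨hab, hab.ne, (inSub_iff_of_le hab.le).2 ⟨h1, h⟩⟩

end LeftSize

section Tamari

variable {T T' : BinTree}

lemma Rot.size_eq_s4 (h : Rot T T') : T'.size = T.size := by
  induction h <;> simp only [size] at * <;> omega

lemma Rot.leftSizeAt_le (h : Rot T T') (b : ℕ) : leftSizeAt T' b ≤ leftSizeAt T b := by
  induction h generalizing b with
  | root A B C =>
    have hAB : (node A B).size = A.size + B.size + 1 := rfl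
    simp only [leftSizeAt, Nat.sub_sub]
    split_ifs <;> first | omega | exact le_of_eq (congrArg _ (by omega))
  | left R h ih =>
    have := h.size_eq_s4
    simp only [leftSizeAt, this]
    split_ifs <;> first | omega | exact ih b
  | right L _ ih =>
    simp only [leftSizeAt]
    split_ifs <;> first | omega | exact ih _

lemma TamariLE.size_eq_s4 (h : TamariLE T' T) : T.size = T'.size := by
  induction h with
  | refl => rfl
  | tail _ hrot ih => rw [hrot.size_eq_s4, ih]

lemma TamariLE.leftSizeAt_le (h : TamariLE T' T) (b : ℕ) : leftSizeAt T b ≤ leftSizeAt T' b := by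
  induction h with
  | refl => exact le_rfl
  | tail _ hrot ih => exact (hrot.leftSizeAt_le b).trans ih

lemma size_le_of_leftSizeAt_node_eq {l r l' r' : BinTree} (hs : (node l r).size = (node l' r').size)
    (h : ∀ b, leftSizeAt (node l r) b = leftSizeAt (node l' r') b) : l.size ≤ l'.size := by
  by_contra hlt
  simp only [size] at hs
  have h' := h (l.size + 1)
  rw [leftSizeAt_node_self, leftSizeAt_node_of_lt (by omega)] at h'
  have := leftSizeAt_lt (T := r') (b := l.size + 1 - (l'.size + 1)) (by omega)
  omega

lemma eq_of_leftSizeAt_eq (hs : T.size = T'.size) (h : ∀ b, leftSizeAt T b = leftSizeAt T' b) :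
    T = T' := by
  induction T generalizing T' with
  | leaf => cases T' <;> simp_all [size]
  | node l r ihl ihr =>
    cases T' with
    | leaf => simp [size] at hs
    | node l' r' =>
      have hl : l.size = l'.size := le_antisymm (size_le_of_leftSizeAt_node_eq hs h)
        (size_le_of_leftSizeAt_node_eq hs.symm fun b => (h b).symm)
      simp only [size] at hs
      congr
      · refine ihl hl fun b => ?_
        rcases le_or_gt b l.size with hb | hb
        · simpa [leftSizeAt_node_of_le hb, leftSizeAt_node_of_le (hl ▸ hb)] using h b
        · rw [leftSizeAt_eq_zero_of_size_lt hb, leftSizeAt_eq_zero_of_size_lt (hl ▸ hb)]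
      · refine ihr (by omega) fun b => ?_
        rcases Nat.eq_zero_or_pos b with rfl | hb
        · simp
        · have := h (b + (l.size + 1))
          rwa [leftSizeAt_node_of_lt (by omega), leftSizeAt_node_of_lt (by omega),
            Nat.add_sub_cancel, hl, Nat.add_sub_cancel] at this

/-- The right rotation at `y`, whose left child is `x`. -/
lemma exists_rot_at {y : ℕ} (hy : 0 < leftSizeAt T y) :
    ∃ x T'', Rot T T'' ∧ x < y ∧ x - leftSizeAt T x = y - leftSizeAt T y ∧
      leftSizeAt T'' y = y - 1 - x ∧ ∀ b ≠ y, leftSizeAt T'' b = leftSizeAt T b := by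
  induction T generalizing y with
  | leaf => simp at hy
  | node l r ihl ihr =>
    rcases lt_trichotomy y (l.size + 1) with hyl | rfl | hyr
    · rw [leftSizeAt_node_of_le (by omega)] at hy
      obtain ⟨x, l'', hrot, hxy, hx, hy'', hb⟩ := ihl hy
      have hs := hrot.size_eq_s4
      refine ⟨x, node l'' r, hrot.left r, hxy, ?_, ?_, fun b hby => ?_⟩
      · rwa [leftSizeAt_node_of_le (by omega), leftSizeAt_node_of_le (by omega)]
      · rwa [leftSizeAt_node_of_le (by omega)]
      · simp only [leftSizeAt, hs]
        split_ifs <;> first | rfl | exact hb b hby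
    · rw [leftSizeAt_node_self] at hy
      cases l with
      | leaf => simp [size] at hy
      | node A B =>
        have hAB : (node A B).size = A.size + B.size + 1 := rfl
        refine ⟨A.size + 1, node A (node B r), Rot.root A B r, by omega, ?_, ?_, fun b hby => ?_⟩
        · simp [leftSizeAt_node_of_le (show A.size + 1 ≤ (node A B).size by omega)]
        · simp only [leftSizeAt, Nat.sub_sub]
          split_ifs <;> omega
        · simp only [leftSizeAt, Nat.sub_sub]
          split_ifs <;> first | omega | exact congrArg _ (by omega)
    · rw [leftSizeAt_node_of_lt hyr] at hy
      obtain ⟨x, r'', hrot, hxy, hx, hy'', hb⟩ := ihr hy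
      have := leftSizeAt_lt (T := r) (b := y - (l.size + 1)) (by omega)
      have := leftSizeAt_le_self (T := r) (b := x)
      refine ⟨x + (l.size + 1), node l r'', hrot.right l, by omega, ?_, ?_, fun b hby => ?_⟩
      · rw [leftSizeAt_node_of_lt (by omega), leftSizeAt_node_of_lt hyr, Nat.add_sub_cancel]
        omega
      · rw [leftSizeAt_node_of_lt hyr]
        omega
      · simp only [leftSizeAt]
        split_ifs <;> first | rfl | exact hb _ (by omega)

lemma exists_rot_of_leftSizeAt_lt (hs : T'.size = T.size)
    (hle : ∀ b, leftSizeAt T b ≤ leftSizeAt T' b) {y : ℕ}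
    (hy : leftSizeAt T y < leftSizeAt T' y) :
    ∃ T'', Rot T' T'' ∧ (∀ b, leftSizeAt T b ≤ leftSizeAt T'' b) ∧
      ∃ z, leftSizeAt T'' z < leftSizeAt T' z := by
  induction y using Nat.strong_induction_on with
  | _ y ih =>
  obtain ⟨x, T'', hrot, hxy, hx, hy'', hb⟩ := exists_rot_at (Nat.zero_lt_of_lt hy)
  have hyT' := one_le_and_le_size_of_leftSizeAt_pos (Nat.zero_lt_of_lt hy)
  have := leftSizeAt_lt (T := T') hyT'.1
  by_cases hcase : leftSizeAt T y ≤ y - 1 - x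
  · refine ⟨T'', hrot, fun b => ?_, y, by omega⟩
    rcases eq_or_ne b y with rfl | hby
    · omega
    · rw [hb b hby]; exact hle b
  · -- the left child `x` of `y` in `T'` then lies below `y` in `T`, so it is a smaller witness
    have hxy_sub : inSub T x y := (inSub_iff_of_le hxy.le).2 ⟨by omega, by omega, by omega⟩
    have := sub_leftSizeAt_le_of_inSub hxy_sub hxy.le
    exact ih x hxy (by omega)

lemma tamariLE_of_leftSizeAt_le (hs : T'.size = T.size)
    (hle : ∀ b, leftSizeAt T b ≤ leftSizeAt T' b) : TamariLE T' T := by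
  induction hm : ∑ b ∈ Finset.range (T.size + 1), leftSizeAt T' b using Nat.strong_induction_on
    generalizing T' with
  | _ m ih =>
  by_cases heq : ∀ b, leftSizeAt T' b ≤ leftSizeAt T b
  · rw [eq_of_leftSizeAt_eq hs fun b => le_antisymm (heq b) (hle b)]
    exact Relation.ReflTransGen.refl
  push Not at heq
  obtain ⟨y, hy⟩ := heq
  obtain ⟨T'', hrot, hle'', z, hz⟩ := exists_rot_of_leftSizeAt_lt hs hle hy
  have hz_mem : z ∈ Finset.range (T.size + 1) := by
    have := one_le_and_le_size_of_leftSizeAt_pos (Nat.zero_lt_of_lt hz)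
    rw [Finset.mem_range]; omega
  have hlt : ∑ b ∈ Finset.range (T.size + 1), leftSizeAt T'' b < m :=
    hm ▸ Finset.sum_lt_sum (fun b _ => hrot.leftSizeAt_le b) ⟨z, hz_mem, hz⟩
  exact .head hrot (ih _ hlt (hrot.size_eq_s4.trans hs) hle'' rfl)

lemma tamariLE_iff_incRel_imp (hs : T'.size = T.size) :
    TamariLE T' T ↔ ∀ a b, incRel T a b → incRel T' a b := by
  constructor
  · intro h a b hab
    have := h.leftSizeAt_le b
    rw [incRel_iff] at hab ⊢
    omega
  · intro h
    refine tamariLE_of_leftSizeAt_le hs fun b => ?_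
    rcases Nat.eq_zero_or_pos (leftSizeAt T b) with h0 | hpos
    · omega
    have hb := one_le_and_le_size_of_leftSizeAt_pos hpos
    have := leftSizeAt_lt (T := T) hb.1
    have hinc := h (b - leftSizeAt T b) b (incRel_iff.2 ⟨by omega, by omega, hb.2, le_rfl⟩)
    rw [incRel_iff] at hinc
    omega

end Tamari

section Cartesian

variable {pos : ℕ → ℕ} {n : ℕ}

noncomputable def argmaxLabel (pos : ℕ → ℕ) (n : ℕ) : ℕ :=
  if h : n = 0 then 0 else
    Classical.choose ((Finset.Icc 1 n).exists_max_image pos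
      ⟨1, Finset.mem_Icc.2 ⟨le_rfl, Nat.pos_of_ne_zero h⟩⟩)

lemma argmaxLabel_spec (hn : n ≠ 0) :
    1 ≤ argmaxLabel pos n ∧ argmaxLabel pos n ≤ n ∧
      ∀ c, 1 ≤ c → c ≤ n → pos c ≤ pos (argmaxLabel pos n) := by
  rw [argmaxLabel, dif_neg hn]
  obtain ⟨hmem, hmax⟩ := Classical.choose_spec
    ((Finset.Icc 1 n).exists_max_image pos ⟨1, Finset.mem_Icc.2 ⟨le_rfl, Nat.pos_of_ne_zero hn⟩⟩)
  rw [Finset.mem_Icc] at hmem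
  exact ⟨hmem.1, hmem.2, fun c h1 h2 => hmax c (Finset.mem_Icc.2 ⟨h1, h2⟩)⟩

/-- The binary search tree on `1, …, n` in which every node has a larger `pos` than its
descendants; for `pos` the positions of the letters of a word, it is the tree obtained by
inserting the letters from right to left. -/
noncomputable def cartesianTree (pos : ℕ → ℕ) (n : ℕ) : BinTree :=
  if n = 0 then leaf else
    node (cartesianTree pos (argmaxLabel pos n - 1))
      (cartesianTree (fun c => pos (c + argmaxLabel pos n)) (n - argmaxLabel pos n))
termination_by n
decreasing_by all_goals have := argmaxLabel_spec (pos := pos) ‹_›; omega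

@[simp] lemma cartesianTree_zero : cartesianTree pos 0 = leaf := by
  rw [cartesianTree, if_pos rfl]

lemma cartesianTree_of_ne_zero (hn : n ≠ 0) :
    cartesianTree pos n = node (cartesianTree pos (argmaxLabel pos n - 1))
      (cartesianTree (fun c => pos (c + argmaxLabel pos n)) (n - argmaxLabel pos n)) := by
  rw [cartesianTree, if_neg hn]

@[simp] lemma size_cartesianTree : (cartesianTree pos n).size = n := by
  induction n using Nat.strong_induction_on generalizing pos with
  | _ n ih =>
  rcases eq_or_ne n 0 with rfl | hn
  · simp [size]
  have := argmaxLabel_spec (pos := pos) hn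
  rw [cartesianTree_of_ne_zero hn, size, ih _ (by omega), ih _ (by omega)]
  omega

lemma inSub_cartesianTree (hinj : Set.InjOn pos (Set.Icc 1 n)) (a b : ℕ) :
    inSub (cartesianTree pos n) a b ↔ 1 ≤ a ∧ a ≤ n ∧ 1 ≤ b ∧ b ≤ n ∧
      ∀ c, min a b ≤ c → c ≤ max a b → c ≠ b → pos c < pos b := by
  induction n using Nat.strong_induction_on generalizing pos a b with
  | _ n ih =>
  rcases eq_or_ne n 0 with rfl | hn
  · simp only [cartesianTree_zero, inSub, false_iff]
    omega
  rw [cartesianTree_of_ne_zero hn]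
  obtain ⟨hr1, hrn, hle⟩ := argmaxLabel_spec (pos := pos) hn
  set r := argmaxLabel pos n
  have hmax : ∀ c, 1 ≤ c → c ≤ n → c ≠ r → pos c < pos r := fun c h1 h2 hcr =>
    (hle c h1 h2).lt_of_ne fun h => hcr (hinj ⟨h1, h2⟩ ⟨hr1, hrn⟩ h)
  have ihL := ih (r - 1) (by omega) (hinj.mono (Set.Icc_subset_Icc_right (by omega)))
  have ihR := ih (n - r) (by omega) (pos := fun c => pos (c + r)) fun x hx y hy hxy => by
    simp only [Set.mem_Icc] at hx hy
    exact Nat.add_right_cancel (hinj ⟨by omega, by omega⟩ ⟨by omega, by omega⟩ hxy)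
  simp only [inSub, size_cartesianTree, ihL, ihR, show r - 1 + 1 = r by omega]
  constructor
  · rintro (⟨rfl, ha1, ha2⟩ | ⟨ha1, ha2, hb1, hb2, hc⟩ | ⟨ha, hb, ha1, ha2, hb1, hb2, hc⟩)
    · exact ⟨ha1, by omega, hr1, hrn, fun c h1 h2 hcb => hmax c (by omega) (by omega) hcb⟩
    · exact ⟨ha1, by omega, hb1, by omega, hc⟩
    · refine ⟨by omega, by omega, by omega, by omega, fun c h1 h2 hcb => ?_⟩
      have := hc (c - r) (by omega) (by omega) (by omega)
      rwa [Nat.sub_add_cancel (by omega), Nat.sub_add_cancel (by omega)] at this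
  · rintro ⟨ha1, ha2, hb1, hb2, hc⟩
    rcases lt_trichotomy b r with hbr | rfl | hbr
    · have har : a < r := by
        by_contra! h
        exact (hc r (by omega) (by omega) hbr.ne').not_gt (hmax b hb1 hb2 hbr.ne)
      exact Or.inr (Or.inl ⟨ha1, by omega, hb1, by omega, hc⟩)
    · exact Or.inl ⟨rfl, ha1, by omega⟩
    · have har : r < a := by
        by_contra! h
        exact (hc r (by omega) (by omega) hbr.ne).not_gt (hmax b hb1 hb2 hbr.ne')
      refine Or.inr (Or.inr ⟨har, hbr, by omega, by omega, by omega, by omega,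
        fun c h1 h2 hcb => ?_⟩)
      rw [Nat.sub_add_cancel hbr.le]
      exact hc (c + r) (by omega) (by omega) (by omega)

lemma lt_of_bstRel_cartesianTree (hinj : Set.InjOn pos (Set.Icc 1 n)) {a b : ℕ}
    (h : bstRel (cartesianTree pos n) a b) : pos a < pos b := by
  obtain ⟨hab, h⟩ := h
  obtain ⟨-, -, -, -, hc⟩ := (inSub_cartesianTree hinj a b).1 h
  exact hc a (min_le_left a b) (le_max_left a b) hab

lemma incRel_cartesianTree {T : BinTree} (hinj : Set.InjOn pos (Set.Icc 1 T.size))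
    (hpos : ∀ a b, incRel T a b → pos a < pos b) {a b : ℕ} (h : incRel T a b) :
    incRel (cartesianTree pos T.size) a b := by
  obtain ⟨hab, hne, hsub⟩ := h
  have hb := inSub_bounds hsub
  refine ⟨hab, hne, (inSub_cartesianTree hinj a b).2
    ⟨hb.1, hb.2.1, hb.2.2.1, hb.2.2.2, fun c h1 h2 hcb => ?_⟩⟩
  rw [min_eq_left hab.le] at h1
  rw [max_eq_right hab.le] at h2
  exact hpos c b ⟨by omega, hcb, inSub_of_le_of_le hsub h1 h2⟩

end Cartesian

end BinTree

section LetterPos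

variable {n : ℕ} {σ : Equiv.Perm (Fin n)}

/-- The position in the word `σ(1)…σ(n)` of the letter `c ∈ {1, …, n}`. -/
def letterPos (σ : Equiv.Perm (Fin n)) (c : ℕ) : ℕ :=
  if h : c - 1 < n then σ.symm ⟨c - 1, h⟩ else 0

lemma letterPos_apply (i : Fin n) : letterPos σ (σ i + 1) = i := by
  simp [letterPos]

lemma letterPos_injOn : Set.InjOn (letterPos σ) (Set.Icc 1 n) := by
  intro a ha b hb h
  simp only [Set.mem_Icc] at ha hb
  simp only [letterPos, dif_pos (show a - 1 < n by omega), dif_pos (show b - 1 < n by omega),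
    Fin.val_inj, EmbeddingLike.apply_eq_iff_eq, Fin.mk.injEq] at h
  omega

lemma isLinExt_iff_letterPos {rel : ℕ → ℕ → Prop}
    (hrel : ∀ a b, rel a b → 1 ≤ a ∧ a ≤ n ∧ 1 ≤ b ∧ b ≤ n) :
    IsLinExt n rel σ ↔ ∀ a b, rel a b → letterPos σ a < letterPos σ b := by
  constructor
  · intro h a b hab
    obtain ⟨ha1, ha2, hb1, hb2⟩ := hrel a b hab
    obtain ⟨i, rfl⟩ : ∃ i, (σ i : ℕ) + 1 = a := ⟨σ.symm ⟨a - 1, by omega⟩, by simp; omega⟩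
    obtain ⟨j, rfl⟩ : ∃ j, (σ j : ℕ) + 1 = b := ⟨σ.symm ⟨b - 1, by omega⟩, by simp; omega⟩
    rw [letterPos_apply, letterPos_apply]
    exact h i j hab
  · intro h i j hij
    simpa only [letterPos_apply, Fin.val_fin_lt] using h _ _ hij

end LetterPos

/-- For every binary tree `T` of size `n`, a permutation `σ` of `{1,…,n}` is a
linear extension of the increasing forest `inc(T)` iff it is a linear extension of the
binary search tree poset of some binary tree `T'` of size `n` with `T' ≤ T` in the Tamari
order: `ExtL(inc(T)) = ⋃_{T' ≤ T} ExtL(T')`. -/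
theorem linExt_incForest (T : BinTree) (σ : Equiv.Perm (Fin T.size)) :
    IsLinExt T.size (incRel T) σ ↔
      ∃ T' : BinTree, T'.size = T.size ∧ TamariLE T' T ∧ IsLinExt T.size (bstRel T') σ := by
  have bounds : ∀ T' : BinTree, T'.size = T.size → ∀ a b, bstRel T' a b →
      1 ≤ a ∧ a ≤ T.size ∧ 1 ≤ b ∧ b ≤ T.size := fun T' hs a b h => hs ▸ inSub_bounds h.2
  constructor
  · intro h
    have hpos := (isLinExt_iff_letterPos fun a b hab => bounds T rfl a b hab.2).1 h
    refine ⟨cartesianTree (letterPos σ) T.size, size_cartesianTree, ?_, ?_⟩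
    · exact (tamariLE_iff_incRel_imp size_cartesianTree).2 fun a b =>
        incRel_cartesianTree letterPos_injOn hpos
    · exact (isLinExt_iff_letterPos (bounds _ size_cartesianTree)).2 fun a b =>
        lt_of_bstRel_cartesianTree letterPos_injOn
  · rintro ⟨T', hs, hle, hext⟩ i j hij
    exact hext i j ((tamariLE_iff_incRel_imp hs).1 hle _ _ hij).2
end

section
/- For every binary tree T of size n, a permutation σ of {1,…,n} is a linear extension of the decreasing forest dec(T) if and only if σ is a linear extension of the binary search tree poset of some binary tree T' of size n with T ≤ T' in the Tamari order; that is, ExtL(dec(T)) = ⋃_{T' ≥ T} ExtL(T'). -/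
open Polynomial

open BinTree

namespace TamariAux
open BinTree

lemma inSub_node_iff (l r : BinTree) (a b : ℕ) :
    inSub (node l r) a b ↔
      (b = l.size + 1 ∧ 1 ≤ a ∧ a ≤ l.size + r.size + 1) ∨
      inSub l a b ∨
      (l.size + 1 < a ∧ l.size + 1 < b ∧ inSub r (a - (l.size + 1)) (b - (l.size + 1))) :=
  Iff.rfl

lemma rot_size {T T' : BinTree} (h : Rot T T') : T'.size = T.size := by
  induction h with
  | root A B C => simp [size]; ring
  | left R h ih => simp [size, ih]
  | right L h ih => simp [size, ih]

lemma inSub_range {T : BinTree} {a b : ℕ} (h : inSub T a b) :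
    1 ≤ a ∧ a ≤ T.size ∧ 1 ≤ b ∧ b ≤ T.size := by
  induction T generalizing a b with
  | leaf => exact h.elim
  | node l r ihl ihr =>
    rcases h with ⟨hb, ha⟩ | h | ⟨ha, hb, h⟩
    · simp [size]; omega
    · have := ihl h; simp [size]; omega
    · have := ihr h; simp only [size]; omega

lemma decRel_range {T : BinTree} {a b : ℕ} (h : decRel T a b) :
    1 ≤ a ∧ a ≤ T.size ∧ 1 ≤ b ∧ b ≤ T.size := inSub_range h.2.2

lemma bstRel_range {T : BinTree} {a b : ℕ} (h : bstRel T a b) :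
    1 ≤ a ∧ a ≤ T.size ∧ 1 ≤ b ∧ b ≤ T.size := inSub_range h.2

lemma dec_left {l r : BinTree} {a b : ℕ} (h : decRel l a b) : decRel (node l r) a b :=
  ⟨h.1, h.2.1, Or.inr (Or.inl h.2.2)⟩

lemma dec_right {l r : BinTree} {a b : ℕ} (h : decRel r a b) :
    decRel (node l r) (a + (l.size + 1)) (b + (l.size + 1)) := by
  have hr := inSub_range h.2.2
  have hba := h.1
  have hne := h.2.1
  refine ⟨by omega, by omega, Or.inr (Or.inr ⟨by omega, by omega, ?_⟩)⟩
  simpa using h.2.2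

/-- decreasing relations are preserved by a rotation. -/
lemma rot_dec {T T' : BinTree} (h : Rot T T') : ∀ a b, decRel T a b → decRel T' a b := by
  induction h with
  | root A B C =>
    intro a b hd
    obtain ⟨hba, hne, hin⟩ := hd
    refine ⟨hba, hne, ?_⟩
    simp only [inSub_node_iff, size] at hin ⊢
    rcases hin with ⟨hb, h1, h2⟩ | (⟨hb, h1, h2⟩ | h | ⟨h1, h2, h3⟩) | ⟨h1, h2, h3⟩
    · refine Or.inr (Or.inr ⟨by omega, by omega, Or.inl ⟨by omega, by omega, by omega⟩⟩)
    · exact Or.inl ⟨by omega, by omega, by omega⟩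
    · exact Or.inr (Or.inl h)
    · exact Or.inr (Or.inr ⟨h1, h2, Or.inr (Or.inl h3)⟩)
    · refine Or.inr (Or.inr ⟨by omega, by omega, Or.inr (Or.inr ⟨by omega, by omega, ?_⟩)⟩)
      have e1 : a - (A.size + 1) - (B.size + 1) = a - (A.size + (B.size + 1) + 1) := by omega
      have e2 : b - (A.size + 1) - (B.size + 1) = b - (A.size + (B.size + 1) + 1) := by omega
      rw [e1, e2]; exact h3
  | left R h ih =>
    intro a b hd
    obtain ⟨hba, hne, hin⟩ := hd
    have hsz := rot_size h
    refine ⟨hba, hne, ?_⟩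
    rcases hin with ⟨hb, h1, h2⟩ | hL | ⟨h1, h2, h3⟩
    · exact Or.inl ⟨by omega, by omega, by omega⟩
    · exact Or.inr (Or.inl (ih a b ⟨hba, hne, hL⟩).2.2)
    · rw [inSub_node_iff, hsz]
      exact Or.inr (Or.inr ⟨h1, h2, h3⟩)
  | right L h ih =>
    intro a b hd
    obtain ⟨hba, hne, hin⟩ := hd
    have hsz := rot_size h
    refine ⟨hba, hne, ?_⟩
    rcases hin with ⟨hb, h1, h2⟩ | hL | ⟨h1, h2, h3⟩
    · exact Or.inl ⟨by omega, by omega, by omega⟩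
    · exact Or.inr (Or.inl hL)
    · have hd' := ih _ _ ⟨by omega, by omega, h3⟩
      exact Or.inr (Or.inr ⟨h1, h2, hd'.2.2⟩)

lemma tamari_dec {T T' : BinTree} (h : TamariLE T T') :
    ∀ a b, decRel T a b → decRel T' a b := by
  induction h with
  | refl => exact fun _ _ h => h
  | tail _ hbc ih => exact fun a b h => rot_dec hbc a b (ih a b h)


def incCount : BinTree → ℕ
  | .leaf => 0
  | .node l r => incCount l + incCount r + l.size

lemma rot_incCount {T T' : BinTree} (h : Rot T T') : incCount T' < incCount T := by
  induction h with
  | root A B C => simp [incCount, size]; omega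
  | left R h ih => have := rot_size h; simp only [incCount]; omega
  | right L h ih => simp only [incCount]; omega

/-- `a` occurs before `b` in the word of `σ`. -/
def Before (n : ℕ) (σ : Equiv.Perm (Fin n)) (a b : ℕ) : Prop :=
  ∃ i j : Fin n, i < j ∧ (σ i : ℕ) + 1 = a ∧ (σ j : ℕ) + 1 = b

lemma before_unique {n : ℕ} {σ : Equiv.Perm (Fin n)} {a : ℕ} {j j' : Fin n}
    (h : (σ j : ℕ) + 1 = a) (h' : (σ j' : ℕ) + 1 = a) : j = j' :=
  σ.injective (Fin.val_injective (by omega))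

lemma before_trans {n : ℕ} {σ : Equiv.Perm (Fin n)} {a b c : ℕ}
    (h1 : Before n σ a b) (h2 : Before n σ b c) : Before n σ a c := by
  obtain ⟨i, j, hij, ha, hb⟩ := h1
  obtain ⟨i', j', hij', hb', hc⟩ := h2
  have : i' = j := before_unique hb' hb
  exact ⟨i, j', lt_trans hij (this ▸ hij'), ha, hc⟩

lemma before_asym {n : ℕ} {σ : Equiv.Perm (Fin n)} {a b : ℕ}
    (h1 : Before n σ a b) (h2 : Before n σ b a) : False := by
  obtain ⟨i, j, hij, ha, hb⟩ := h1
  obtain ⟨i', j', hij', hb', ha'⟩ := h2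
  have e1 : i' = j := before_unique hb' hb
  have e2 : j' = i := before_unique ha' ha
  subst e1; subst e2
  exact absurd hij (by omega)

lemma before_total {n : ℕ} {σ : Equiv.Perm (Fin n)} {a b : ℕ}
    (ha1 : 1 ≤ a) (ha2 : a ≤ n) (hb1 : 1 ≤ b) (hb2 : b ≤ n) (hne : a ≠ b) :
    Before n σ a b ∨ Before n σ b a := by
  set i := σ.symm ⟨a - 1, by omega⟩ with hi
  set j := σ.symm ⟨b - 1, by omega⟩ with hj
  have hia : (σ i : ℕ) + 1 = a := by rw [hi]; simp; omega
  have hjb : (σ j : ℕ) + 1 = b := by rw [hj]; simp; omega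
  have hij : i ≠ j := by
    intro h; rw [h] at hia; omega
  rcases lt_or_gt_of_ne hij with h | h
  · exact Or.inl ⟨i, j, h, hia, hjb⟩
  · exact Or.inr ⟨j, i, h, hjb, hia⟩

lemma isLinExt_iff {n : ℕ} (rel : ℕ → ℕ → Prop)
    (hr : ∀ a b, rel a b → 1 ≤ a ∧ a ≤ n ∧ 1 ≤ b ∧ b ≤ n) (σ : Equiv.Perm (Fin n)) :
    IsLinExt n rel σ ↔ ∀ a b, rel a b → Before n σ a b := by
  constructor
  · intro h a b hab
    obtain ⟨ha1, ha2, hb1, hb2⟩ := hr a b hab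
    set i := σ.symm ⟨a - 1, by omega⟩ with hi
    set j := σ.symm ⟨b - 1, by omega⟩ with hj
    have hia : (σ i : ℕ) + 1 = a := by rw [hi]; simp; omega
    have hjb : (σ j : ℕ) + 1 = b := by rw [hj]; simp; omega
    refine ⟨i, j, h i j ?_, hia, hjb⟩
    rw [hia, hjb]; exact hab
  · intro h i j hij
    obtain ⟨i', j', hlt, hi, hj⟩ := h _ _ hij
    have e1 : i' = i := before_unique hi rfl
    have e2 : j' = j := before_unique hj rfl
    subst e1; subst e2; exact hlt


/-- characterization of the decreasing relations of the tree obtained by a root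
rotation: they are those of the original tree plus the pairs `(c, x)` where `x` is the
new root and `c` is the old root or lies in its right subtree. -/
lemma rotatedDec (A B C : BinTree) (c d : ℕ)
    (h : decRel (node A (node B C)) c d) :
    decRel (node (node A B) C) c d ∨
      (d = A.size + 1 ∧ (c = A.size + B.size + 2 ∨
        decRel (node (node A B) C) c (A.size + B.size + 2))) := by
  obtain ⟨hdc, hne, hin⟩ := h
  simp only [inSub_node_iff, size] at hin
  rcases hin with ⟨hd, hc1, hc2⟩ | h | ⟨h1, h2, hin2⟩
  · -- d is the new root x = A.size + 1
    by_cases hc : c ≤ A.size + B.size + 1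
    · exact Or.inl ⟨hdc, hne, Or.inr (Or.inl (Or.inl ⟨by omega, by omega, by omega⟩))⟩
    · by_cases hc' : c = A.size + B.size + 2
      · exact Or.inr ⟨hd, Or.inl hc'⟩
      · refine Or.inr ⟨hd, Or.inr ⟨by omega, by omega, ?_⟩⟩
        simp only [inSub_node_iff, size]
        exact Or.inl ⟨by trivial, by omega, by omega⟩
  · exact Or.inl ⟨hdc, hne, Or.inr (Or.inl (Or.inr (Or.inl h)))⟩
  · rcases hin2 with ⟨hd2, hr1, hr2⟩ | h | ⟨h3, h4, h5⟩
    · -- d is the old root y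
      refine Or.inl ⟨hdc, hne, Or.inl ⟨by simp [size]; omega, by omega, by simp [size]; omega⟩⟩
    · -- inside B
      refine Or.inl ⟨hdc, hne, Or.inr (Or.inl (Or.inr (Or.inr ⟨h1, h2, h⟩)))⟩
    · -- inside C
      refine Or.inl ⟨hdc, hne, Or.inr (Or.inr ⟨by simp [size]; omega, by simp [size]; omega, ?_⟩)⟩
      have e1 : c - (A.size + 1) - (B.size + 1) = c - ((node A B).size + 1) := by
        simp [size]; omega
      have e2 : d - (A.size + 1) - (B.size + 1) = d - ((node A B).size + 1) := by
        simp [size]; omega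
      rw [e1, e2] at h5; exact h5

lemma wrap_left {l l' r : BinTree} (hsz : l'.size = l.size) {bef : ℕ → ℕ → Prop}
    (hdec : ∀ c d, decRel (node l r) c d → bef c d)
    (hl : ∀ c d, decRel l' c d → bef c d) :
    ∀ c d, decRel (node l' r) c d → bef c d := by
  intro c d ⟨hdc, hne, hin⟩
  rcases hin with ⟨hd, h1, h2⟩ | h | ⟨h1, h2, h3⟩
  · exact hdec c d ⟨hdc, hne, Or.inl ⟨by omega, by omega, by omega⟩⟩
  · exact hl c d ⟨hdc, hne, h⟩
  · rw [hsz] at h1 h2 h3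
    exact hdec c d ⟨hdc, hne, Or.inr (Or.inr ⟨h1, h2, h3⟩)⟩

lemma wrap_right {l r r' : BinTree} (hsz : r'.size = r.size) {bef : ℕ → ℕ → Prop}
    (hdec : ∀ c d, decRel (node l r) c d → bef c d)
    (hr : ∀ c d, decRel r' c d → bef (c + (l.size + 1)) (d + (l.size + 1))) :
    ∀ c d, decRel (node l r') c d → bef c d := by
  intro c d ⟨hdc, hne, hin⟩
  rcases hin with ⟨hd, h1, h2⟩ | h | ⟨h1, h2, h3⟩
  · exact hdec c d ⟨hdc, hne, Or.inl ⟨by omega, by omega, by omega⟩⟩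
  · exact hdec c d ⟨hdc, hne, Or.inr (Or.inl h)⟩
  · have h' := hr _ _ ⟨by omega, by omega, h3⟩
    have e1 : c - (l.size + 1) + (l.size + 1) = c := by omega
    have e2 : d - (l.size + 1) + (l.size + 1) = d := by omega
    rwa [e1, e2] at h'


/-- If `bef` is a strict total order respecting the decreasing relations of `T` but
violating some increasing relation of the binary search tree of `T`, then some right
rotation of `T` still has all its decreasing relations respected by `bef`. -/
lemma findRot (T : BinTree) :
    ∀ (bef : ℕ → ℕ → Prop),
      (∀ {x y z : ℕ}, bef x y → bef y z → bef x z) →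
      (∀ {x y : ℕ}, bef x y → bef y x → False) →
      (∀ x y, 1 ≤ x → x ≤ T.size → 1 ≤ y → y ≤ T.size → x ≠ y → bef x y ∨ bef y x) →
      (∀ c d, decRel T c d → bef c d) →
      ∀ a b, bstRel T a b → a < b → bef b a →
      ∃ T'', Rot T T'' ∧ ∀ c d, decRel T'' c d → bef c d := by
  induction T with
  | leaf => exact fun bef _ _ _ _ a b hab _ _ => absurd hab.2 id
  | node l r ihl ihr =>
    intro bef htr has htot hdec a b hbst hab hba
    obtain ⟨hne, hin⟩ := hbst
    rcases hin with ⟨hb, ha1, ha2⟩ | hin | ⟨ha, hb, hin⟩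
    · -- b is the root label l.size + 1
      subst hb
      rcases l with _ | ⟨A, B⟩
      · exfalso; simp only [size] at hab; omega
      · have hlsz : (node A B).size = A.size + B.size + 1 := rfl
        have hTsz : (node (node A B) r).size = A.size + B.size + r.size + 2 := by
          simp [size]; ring
        have hax : ∀ a', 1 ≤ a' → a' ≤ (node A B).size → inSub (node A B) a' (A.size + 1) :=
          fun a' h1 h2 => Or.inl ⟨rfl, h1, by omega⟩
        have hxm : bef ((node A B).size + 1) (A.size + 1) ∨
            bef (A.size + 1) ((node A B).size + 1) :=
          htot ((node A B).size + 1) (A.size + 1) (by omega) (by omega) (by omega)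
            (by omega) (by omega)
        rcases hxm with hmx | hxm
        · -- the root comes before x : rotate at the root
          refine ⟨node A (node B r), Rot.root A B r, ?_⟩
          intro c d hcd
          rcases rotatedDec A B r c d hcd with h | ⟨hd, h⟩
          · exact hdec c d h
          · subst hd
            have e : A.size + B.size + 2 = (node A B).size + 1 := by omega
            rcases h with h | h
            · rw [h, e]; exact hmx
            · exact htr (hdec c ((node A B).size + 1) (e ▸ h)) hmx
        · -- x comes before the root : recurse into the left subtree
          have hbxa : bef (A.size + 1) a := htr hxm hba
          have haxlt : a < A.size + 1 := by
            rcases Nat.lt_trichotomy a (A.size + 1) with h | h | h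
            · exact h
            · exfalso; rw [h] at hba; exact has hxm hba
            · exfalso
              have : bef a (A.size + 1) :=
                hdec a (A.size + 1)
                  ⟨h, by omega, Or.inr (Or.inl (hax a ha1 (by omega)))⟩
              exact has this hbxa
          obtain ⟨l'', hrot, hl''⟩ :=
            ihl bef htr has
              (fun u v h1 h2 h3 h4 h5 => htot u v h1 (by omega) h3 (by omega) h5)
              (fun c d h => hdec c d (dec_left h))
              a (A.size + 1) ⟨by omega, hax a ha1 (by omega)⟩ haxlt hbxa
          exact ⟨node l'' r, Rot.left r hrot, wrap_left (rot_size hrot) hdec hl''⟩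
    · -- the violation is inside the left subtree
      have hsz : (node l r).size = l.size + r.size + 1 := rfl
      obtain ⟨l'', hrot, hl''⟩ :=
        ihl bef htr has
          (fun u v h1 h2 h3 h4 h5 => htot u v h1 (by omega) h3 (by omega) h5)
          (fun c d h => hdec c d (dec_left h))
          a b ⟨hne, hin⟩ hab hba
      exact ⟨node l'' r, Rot.left r hrot, wrap_left (rot_size hrot) hdec hl''⟩
    · -- the violation is inside the right subtree
      have hsz : (node l r).size = l.size + r.size + 1 := rfl
      have hr := inSub_range hin
      obtain ⟨r'', hrot, hr''⟩ :=
        ihr (fun u v => bef (u + (l.size + 1)) (v + (l.size + 1)))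
          (fun h1 h2 => htr h1 h2) (fun h1 h2 => has h1 h2)
          (fun u v h1 h2 h3 h4 h5 =>
            htot (u + (l.size + 1)) (v + (l.size + 1)) (by omega) (by omega)
              (by omega) (by omega) (by omega))
          (fun c d h => hdec _ _ (dec_right h))
          (a - (l.size + 1)) (b - (l.size + 1)) ⟨by omega, hin⟩ (by omega)
          (by
            show bef (b - (l.size + 1) + (l.size + 1)) (a - (l.size + 1) + (l.size + 1))
            have e1 : b - (l.size + 1) + (l.size + 1) = b := by omega
            have e2 : a - (l.size + 1) + (l.size + 1) = a := by omega
            rw [e1, e2]; exact hba)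
      exact ⟨node l r'', Rot.right l hrot, wrap_right (rot_size hrot) hdec hr''⟩


lemma step {n : ℕ} (T : BinTree) (hsz : T.size = n) (σ : Equiv.Perm (Fin n))
    (hdec : IsLinExt n (decRel T) σ) (hnot : ¬ IsLinExt n (bstRel T) σ) :
    ∃ T'', Rot T T'' ∧ IsLinExt n (decRel T'') σ := by
  subst hsz
  have hdrange : ∀ a b, decRel T a b → 1 ≤ a ∧ a ≤ T.size ∧ 1 ≤ b ∧ b ≤ T.size :=
    fun a b h => decRel_range h
  have hbrange : ∀ a b, bstRel T a b → 1 ≤ a ∧ a ≤ T.size ∧ 1 ≤ b ∧ b ≤ T.size :=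
    fun a b h => bstRel_range h
  have hdecB : ∀ c d, decRel T c d → Before T.size σ c d :=
    (isLinExt_iff _ hdrange σ).1 hdec
  rw [isLinExt_iff _ hbrange σ] at hnot
  push_neg at hnot
  obtain ⟨a, b, hab, hnb⟩ := hnot
  obtain ⟨ha1, ha2, hb1, hb2⟩ := bstRel_range hab
  have hne : a ≠ b := hab.1
  have hba : Before T.size σ b a := by
    rcases before_total ha1 ha2 hb1 hb2 hne with h | h
    · exact absurd h hnb
    · exact h
  have haltb : a < b := by
    rcases Nat.lt_trichotomy a b with h | h | h
    · exact h
    · exact absurd h hne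
    · exact absurd (hdecB a b ⟨h, hab⟩) hnb
  obtain ⟨T'', hrot, hT''⟩ :=
    findRot T (Before T.size σ) (fun h1 h2 => before_trans h1 h2)
      (fun h1 h2 => before_asym h1 h2)
      (fun x y hx1 hx2 hy1 hy2 hxy => before_total hx1 hx2 hy1 hy2 hxy)
      hdecB a b hab haltb hba
  refine ⟨T'', hrot, ?_⟩
  rw [isLinExt_iff _ (fun a b h => ?_) σ]
  · exact hT''
  · have := decRel_range h
    rw [rot_size hrot] at this
    exact this

lemma main_aux : ∀ (m n : ℕ) (T : BinTree) (σ : Equiv.Perm (Fin n)), T.size = n →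
    incCount T ≤ m → IsLinExt n (decRel T) σ →
    ∃ T', T'.size = n ∧ TamariLE T T' ∧ IsLinExt n (bstRel T') σ := by
  intro m
  induction m with
  | zero =>
    intro n T σ hsz hc hlin
    by_cases h : IsLinExt n (bstRel T) σ
    · exact ⟨T, hsz, Relation.ReflTransGen.refl, h⟩
    · obtain ⟨T'', hrot, _⟩ := step T hsz σ hlin h
      have := rot_incCount hrot
      omega
  | succ m ih =>
    intro n T σ hsz hc hlin
    by_cases h : IsLinExt n (bstRel T) σ
    · exact ⟨T, hsz, Relation.ReflTransGen.refl, h⟩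
    · obtain ⟨T'', hrot, hlin''⟩ := step T hsz σ hlin h
      obtain ⟨T', h1, h2, h3⟩ := ih n T'' σ (by rw [rot_size hrot]; exact hsz)
        (by have := rot_incCount hrot; omega) hlin''
      exact ⟨T', h1, Relation.ReflTransGen.head hrot h2, h3⟩

end TamariAux


/-- For every binary tree `T` of size `n`, a permutation `σ` of `{1,…,n}` is a
linear extension of the decreasing forest `dec(T)` iff it is a linear extension of the
binary search tree poset of some binary tree `T'` of size `n` with `T ≤ T'` in the Tamari
order: `ExtL(dec(T)) = ⋃_{T' ≥ T} ExtL(T')`. -/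
theorem linExt_decForest (T : BinTree) (σ : Equiv.Perm (Fin T.size)) :
    IsLinExt T.size (decRel T) σ ↔
      ∃ T' : BinTree, T'.size = T.size ∧ TamariLE T T' ∧ IsLinExt T.size (bstRel T') σ := by
  constructor
  · intro h
    exact TamariAux.main_aux (TamariAux.incCount T) T.size T σ rfl le_rfl h
  · rintro ⟨T', hsz, hle, hlin⟩ i j hij
    exact hlin i j (TamariAux.tamari_dec hle _ _ hij).2
end
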